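/- Let G₂ = ℤ² ⋊_{-I} ℤ be the semidirect product in which the generator t of ℤ acts on ℤ² by negation, let x = ((1,0);0), y = ((0,1);0), and let U be the subgroup of G₂ generated by y and t. Then: the normalizer N_G₂(U) equals U; U has infinite index in G₂; and the normal core Core_G₂(U) is the subgroup generated by y and t², which has index 2 in U. -/

import Mathlib

/-!
Write `a(g)` for the `x`-coordinate of `g ∈ G₂` and `ε(g) = (-1)^{t(g)}` for the sign by which
`g` acts on `ℤ²`. Then `a` is a crossed homomorphism, `a(gh) = a(g) + ε(g) a(h)`, so
`a(hgh⁻¹) = ε(h) a(g) + (1 - ε(g)) a(h)`, and `U = ⟨y, t⟩` is exactly `{a = 0}`.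
Conjugating `t` by `g` gives `a = 2 a(g)`, so only `U` normalizes `U`; conjugating an element
of the core by `x` gives `a = 1 - ε`, forcing an even `t`-coordinate. The powers of `x` lie in
distinct cosets of `U`.
-/

/-- The action `φ : ℤ → Aut(ℤ²)` sending the generator `t` of `ℤ` to `-I`
(negation, i.e. multiplicative inversion). -/
def phiNeg : Multiplicative ℤ →* MulAut (Multiplicative (ℤ × ℤ)) :=
  zpowersHom (MulAut (Multiplicative (ℤ × ℤ)))
    (MulEquiv.inv (Multiplicative (ℤ × ℤ)))

/-- The flat group `G₂ = ℤ² ⋊_{-I} ℤ`,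
i.e. `⟨x, y, t ∣ xy = yx, txt⁻¹ = x⁻¹, tyt⁻¹ = y⁻¹⟩`. -/
abbrev GTwo : Type := Multiplicative (ℤ × ℤ) ⋊[phiNeg] Multiplicative ℤ

def tG : GTwo := SemidirectProduct.inr (Multiplicative.ofAdd 1)

def xG : GTwo := SemidirectProduct.inl (Multiplicative.ofAdd ((1 : ℤ), (0 : ℤ)))

def yG : GTwo := SemidirectProduct.inl (Multiplicative.ofAdd ((0 : ℤ), (1 : ℤ)))

lemma Int.coe_negOnePow_mul_self (n : ℤ) : (n.negOnePow : ℤ) * n.negOnePow = 1 := by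
  rw [← Units.val_mul, Int.units_mul_self, Units.val_one]

lemma phiNeg_apply (n : Multiplicative ℤ) (z : Multiplicative (ℤ × ℤ)) :
    phiNeg n z = z ^ ((n.toAdd.negOnePow : ℤˣ) : ℤ) := by
  induction n using Multiplicative.rec with | _ n => ?_
  induction n using Int.induction_on generalizing z with
  | zero => simp [phiNeg]
  | succ k ih =>
    rw [ofAdd_add, map_mul, MulAut.mul_apply, ih]
    simp [phiNeg, Int.negOnePow_succ]
  | pred k ih =>
    rw [ofAdd_sub, map_div, div_eq_mul_inv, MulAut.mul_apply, ih]
    simp [phiNeg, Int.negOnePow_sub]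

namespace GTwo

open Multiplicative

def xCoord (g : GTwo) : ℤ := (toAdd g.left).1

def tCoord (g : GTwo) : ℤ := toAdd g.right

lemma tCoord_mul (g h : GTwo) : tCoord (g * h) = tCoord g + tCoord h := rfl

lemma tCoord_inv (g : GTwo) : tCoord g⁻¹ = -tCoord g := rfl

lemma xCoord_mul (g h : GTwo) :
    xCoord (g * h) = xCoord g + (tCoord g).negOnePow * xCoord h := by
  simp only [xCoord, tCoord, SemidirectProduct.mul_left, phiNeg_apply, toAdd_mul, toAdd_zpow,
    Prod.fst_add, Prod.smul_fst, smul_eq_mul]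

lemma xCoord_inv (g : GTwo) : xCoord g⁻¹ = -(tCoord g).negOnePow * xCoord g := by
  have h := xCoord_mul g g⁻¹
  rw [mul_inv_cancel] at h
  have : ((tCoord g).negOnePow : ℤ) * (tCoord g).negOnePow = 1 := Int.coe_negOnePow_mul_self _
  change 0 = _ at h
  linear_combination -(tCoord g).negOnePow * h - xCoord g⁻¹ * this

lemma xCoord_conj (h g : GTwo) :
    xCoord (h * g * h⁻¹) = (tCoord h).negOnePow * xCoord g +
      (1 - (tCoord g).negOnePow) * xCoord h := by
  have : ((tCoord h).negOnePow : ℤ) * (tCoord h).negOnePow = 1 := Int.coe_negOnePow_mul_self _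
  rw [xCoord_mul, xCoord_mul, xCoord_inv, tCoord_mul, Int.negOnePow_add, Units.val_mul]
  linear_combination (-(tCoord g).negOnePow * xCoord h) * this

lemma xCoord_inl (z : Multiplicative (ℤ × ℤ)) : xCoord (.inl z) = (toAdd z).1 := rfl

lemma tCoord_inl (z : Multiplicative (ℤ × ℤ)) : tCoord (.inl z) = 0 := rfl

lemma xCoord_xG : xCoord xG = 1 := rfl

lemma xCoord_tG : xCoord tG = 0 := rfl

lemma tCoord_tG : tCoord tG = 1 := rfl

def xZero : Subgroup GTwo where
  carrier := {g | xCoord g = 0}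
  one_mem' := rfl
  mul_mem' {a b} ha hb := by simp_all [xCoord_mul]
  inv_mem' {a} ha := by simp_all [xCoord_inv]

def xZeroTEven : Subgroup GTwo where
  carrier := {g | xCoord g = 0 ∧ Even (tCoord g)}
  one_mem' := ⟨rfl, ⟨0, rfl⟩⟩
  mul_mem' {a b} ha hb := ⟨xZero.mul_mem ha.1 hb.1, by rw [tCoord_mul]; exact ha.2.add hb.2⟩
  inv_mem' {a} ha := ⟨xZero.inv_mem ha.1, by rw [tCoord_inv]; exact ha.2.neg⟩

lemma mem_xZero {g : GTwo} : g ∈ xZero ↔ xCoord g = 0 := Iff.rfl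

lemma xZeroTEven_le_xZero : xZeroTEven ≤ xZero := fun _ hg => hg.1

instance xZeroTEven_normal : xZeroTEven.Normal where
  conj_mem n hn g := by
    refine ⟨?_, by simpa [tCoord_mul, tCoord_inv] using hn.2⟩
    rw [xCoord_conj, hn.1, Int.negOnePow_even _ hn.2]
    simp

lemma yG_zpow (b : ℤ) : yG ^ b = .inl (ofAdd ((0 : ℤ), b)) := by
  rw [yG, ← map_zpow, ← ofAdd_zsmul, Prod.smul_mk, smul_zero, smul_eq_mul, mul_one]

lemma tG_zpow (n : ℤ) : tG ^ n = .inr (ofAdd n) := by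
  rw [tG, ← map_zpow, ← ofAdd_zsmul, smul_eq_mul, mul_one]

lemma eq_yG_zpow_mul_tG_zpow {g : GTwo} (hg : xCoord g = 0) :
    g = yG ^ (toAdd g.left).2 * tG ^ tCoord g := by
  rw [yG_zpow, tG_zpow, ← hg]
  exact (SemidirectProduct.inl_left_mul_inr_right g).symm

lemma closure_yG_tG : Subgroup.closure {yG, tG} = xZero := by
  refine le_antisymm ((Subgroup.closure_le _).mpr ?_) fun g hg => ?_
  · rintro g (rfl | rfl) <;> rfl
  · rw [eq_yG_zpow_mul_tG_zpow hg]
    exact mul_mem (zpow_mem (Subgroup.subset_closure (by simp)) _)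
      (zpow_mem (Subgroup.subset_closure (by simp)) _)

lemma closure_yG_tG_sq : Subgroup.closure {yG, tG ^ 2} = xZeroTEven := by
  refine le_antisymm ((Subgroup.closure_le _).mpr ?_) fun g hg => ?_
  · rintro g (rfl | rfl)
    · exact ⟨rfl, ⟨0, rfl⟩⟩
    · exact ⟨rfl, even_two⟩
  · obtain ⟨hx, m, hm⟩ := hg
    rw [eq_yG_zpow_mul_tG_zpow hx, hm, ← two_mul, zpow_mul]
    exact mul_mem (zpow_mem (Subgroup.subset_closure (by simp)) _)
      (zpow_mem (Subgroup.subset_closure (by simp)) _)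

lemma normalizer_xZero : Subgroup.normalizer (xZero : Set GTwo) = xZero := by
  refine le_antisymm (fun g hg => ?_) Subgroup.le_normalizer
  have hconj : xCoord (g * tG * g⁻¹) = 0 := (Subgroup.mem_normalizer_iff.mp hg tG).mp rfl
  rw [xCoord_conj, xCoord_tG, tCoord_tG, Int.negOnePow_one, Units.val_neg, Units.val_one] at hconj
  exact mem_xZero.mpr (by linarith)

lemma index_xZero : xZero.index = 0 := by
  refine Subgroup.index_eq_zero_iff_infinite.mpr <|
    Infinite.of_injective (fun n : ℤ => ((.inl (ofAdd (n, (0 : ℤ))) : GTwo) : GTwo ⧸ xZero)) ?_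
  intro m n hmn
  have h := mem_xZero.mp (QuotientGroup.eq.mp hmn)
  rw [xCoord_mul, xCoord_inv, tCoord_inv, tCoord_inl, xCoord_inl, xCoord_inl] at h
  simp only [Int.negOnePow_zero, Units.val_one, toAdd_ofAdd, neg_mul, one_mul, neg_zero] at h
  omega

lemma normalCore_xZero : xZero.normalCore = xZeroTEven := by
  refine le_antisymm (fun g hg => ?_) (Subgroup.normal_le_normalCore.mpr xZeroTEven_le_xZero)
  have hx : xCoord g = 0 := xZero.normalCore_le hg
  have hconj : xCoord (xG * g * xG⁻¹) = 0 := hg xG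
  rw [xCoord_conj, hx, xCoord_xG, mul_zero, zero_add, mul_one, sub_eq_zero] at hconj
  exact ⟨hx, (Int.negOnePow_eq_one_iff _).mp (Units.val_eq_one.mp hconj.symm)⟩

lemma relIndex_xZeroTEven_xZero : xZeroTEven.relIndex xZero = 2 := by
  refine Subgroup.relIndex_eq_two_iff_exists_notMem_and.mpr ⟨tG, rfl, fun h => ?_, fun g hg => ?_⟩
  · exact Int.not_even_one h.2
  · rcases Int.even_or_odd (tCoord g) with h | h
    · exact .inr ⟨hg, h⟩
    · exact .inl ⟨xZero.mul_mem hg rfl, by rw [tCoord_mul, tCoord_tG]; exact h.add_one⟩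

end GTwo

/-- In `G₂ = ℤ² ⋊_{-I} ℤ` with `U = ⟨y, t⟩`: the normalizer of `U` equals `U`,
`U` has infinite index in `G₂`, and the normal core of `U` in `G₂` is the
subgroup `⟨y, t²⟩`, which has index 2 in `U`. -/
theorem gtwo_counterexample
    (U : Subgroup GTwo) (hU : U = Subgroup.closure {yG, tG}) :
    Subgroup.normalizer (U : Set GTwo) = U ∧
    U.index = 0 ∧
    U.normalCore = Subgroup.closure {yG, tG ^ 2} ∧
    (Subgroup.closure {yG, tG ^ 2}).relIndex U = 2 := by
  rw [hU, GTwo.closure_yG_tG, GTwo.closure_yG_tG_sq]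
  exact ⟨GTwo.normalizer_xZero, GTwo.index_xZero, GTwo.normalCore_xZero,
    GTwo.relIndex_xZeroTEven_xZero⟩
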